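/- Let L > 0 and let f : E → ℝ be convex with nonempty minimizer set X* and minimum value f*, and suppose f is L-QG+. Consider sequences (x_k)_{k≥0}, (g_k)_{k≥0}, (v_k)_{k≥0} in E and reals (α_k)_{k≥1} such that: v_0 = 0; for every k ≥ 0, g_k ∈ ∂f(x_k) and ⟨g_k, v_k⟩ = 0 and v_{k+1} = v_k + g_k; and for every k ≥ 1, x_k = y_k + α_k·v_k where y_k = (k/(k+1))·x_{k−1} + (1/(k+1))·x_0, with the exact line-search property f(x_k) ≤ f(y_k + α·v_k) for all α ∈ ℝ. Then for every n ∈ ℕ, f(x_n) − f* ≤ (L/(2(n+1)))·d(x_0, X*)². (This is the guarantee for the heavy-ball method with exact line search, which does not use knowledge of L.) -/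

import Mathlib

/-! Testing the QG+ bound at `z + L⁻¹ • g` shows `2L (f x - f*) ≤ 2L ⟪g, x - z⟫ - ‖g‖²` for every
subgradient `g` at `x` and every `z ∈ X*`. Adding `k` times the subgradient inequality between
consecutive iterates, and using `⟪g_k, x_k - y_k⟫ = 0` (as `x_k - y_k` is a multiple of `v_k ⟂ g_k`),
the inner products telescope into `⟪g_k, x₀ - z⟫`, so that
`2L k (f x_{k-1} - f*) + ‖v_k‖² ≤ 2L ⟪v_k, x₀ - z⟫` by induction (`‖v_{k+1}‖² = ‖v_k‖² + ‖g_k‖²`).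
Since `2L ⟪v, d⟫ - ‖v‖² ≤ L² ‖d‖²`, this gives `(k + 1)(f x_k - f*) ≤ L/2 ‖x₀ - z‖²` for each
`z ∈ X*`, and hence the bound with `d(x₀, X*)`. -/

open scoped RealInnerProductSpace

lemma le_mul_infDist_sq {α : Type*} [PseudoMetricSpace α] {s : Set α} {x : α} {a c : ℝ}
    (hc : 0 < c) (hs : s.Nonempty) (h : ∀ z ∈ s, a ≤ c * dist x z ^ 2) :
    a ≤ c * Metric.infDist x s ^ 2 := by
  have hdist : √(a / c) ≤ Metric.infDist x s :=
    (Metric.le_infDist hs).2 fun z hz =>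
      Real.sqrt_le_iff.2 ⟨dist_nonneg, (div_le_iff₀' hc).2 (h z hz)⟩
  exact (div_le_iff₀' hc).1 (Real.sqrt_le_iff.1 hdist).2

lemma two_mul_inner_sub_norm_sq_le {E : Type*} [NormedAddCommGroup E] [InnerProductSpace ℝ E]
    {L : ℝ} (hL : 0 ≤ L) (v d : E) : 2 * L * ⟪v, d⟫ - ‖v‖ ^ 2 ≤ L ^ 2 * ‖d‖ ^ 2 := by
  have hcs : L * ⟪v, d⟫ ≤ ‖v‖ * (L * ‖d‖) := by
    nlinarith [real_inner_le_norm v d]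
  nlinarith [two_mul_le_add_sq ‖v‖ (L * ‖d‖)]

section QuadraticUpperBound

variable {E : Type*} [NormedAddCommGroup E] [InnerProductSpace ℝ E]
  {L : ℝ} {f : E → ℝ} {s : Set E} {fstar : ℝ}

lemma two_mul_sub_le_inner_sub_norm_sq (hL : 0 < L)
    (hQG : ∀ z, f z - fstar ≤ L / 2 * Metric.infDist z s ^ 2) {z : E} (hz : z ∈ s)
    {x g : E} (hg : ∀ y, f y ≥ f x + ⟪g, y - x⟫) :
    2 * L * (f x - fstar) ≤ 2 * L * ⟪g, x - z⟫ - ‖g‖ ^ 2 := by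
  set w := z + L⁻¹ • g
  have hdist : Metric.infDist w s ≤ L⁻¹ * ‖g‖ := by
    calc Metric.infDist w s ≤ dist w z := Metric.infDist_le_dist_of_mem hz
      _ = L⁻¹ * ‖g‖ := by
        rw [dist_eq_norm, add_sub_cancel_left, norm_smul, Real.norm_of_nonneg (by positivity)]
  have hgap : 2 * L * (f w - fstar) ≤ ‖g‖ ^ 2 := by
    calc 2 * L * (f w - fstar) ≤ 2 * L * (L / 2 * Metric.infDist w s ^ 2) := by
          gcongr; exact hQG w
      _ ≤ 2 * L * (L / 2 * (L⁻¹ * ‖g‖) ^ 2) := by gcongr; exact Metric.infDist_nonneg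
      _ = ‖g‖ ^ 2 := by field_simp
  have hinner : ⟪g, w - x⟫ = L⁻¹ * ‖g‖ ^ 2 - ⟪g, x - z⟫ := by
    rw [show w - x = L⁻¹ • g - (x - z) by simp only [w]; abel, inner_sub_right,
      real_inner_smul_right, real_inner_self_eq_norm_sq]
  have hw := hg w
  rw [hinner] at hw
  have hL' : L * L⁻¹ = 1 := mul_inv_cancel₀ hL.ne'
  nlinarith

lemma heavyBall_step (hL : 0 < L)
    (hQG : ∀ z, f z - fstar ≤ L / 2 * Metric.infDist z s ^ 2) {z : E} (hz : z ∈ s)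
    {K : ℝ} (hK : 0 ≤ K) {x x' y x₀ g : E} (hg : ∀ y, f y ≥ f x + ⟪g, y - x⟫)
    (hy : (K + 1) • y = K • x' + x₀) (hxy : ⟪g, x - y⟫ = 0) :
    2 * L * (K + 1) * (f x - fstar) + ‖g‖ ^ 2 ≤
      2 * L * K * (f x' - fstar) + 2 * L * ⟪g, x₀ - z⟫ := by
  have hA := two_mul_sub_le_inner_sub_norm_sq hL hQG hz hg
  have hB : f x - f x' ≤ ⟪g, x - x'⟫ := by
    have := hg x'
    rw [← neg_sub x x', inner_neg_right] at this
    linarith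
  have hsplit : K • (x - x') + (x - z) = (K + 1) • (x - y) + (x₀ - z) := by
    rw [smul_sub (K + 1), hy]; module
  have hid : K * ⟪g, x - x'⟫ + ⟪g, x - z⟫ = ⟪g, x₀ - z⟫ := by
    have := congrArg (⟪g, ·⟫) hsplit
    simpa only [inner_add_right, real_inner_smul_right, hxy, mul_zero, zero_add] using this
  have hBK := mul_le_mul_of_nonneg_left hB (by positivity : 0 ≤ 2 * L * K)
  nlinarith

end QuadraticUpperBound

/-- For `m = 0` the term `x (m - 1)` is `x 0` (truncated subtraction), multiplied by `0`. -/
lemma heavyBall_potential {E : Type*} [NormedAddCommGroup E] [InnerProductSpace ℝ E]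
    {L : ℝ} (hL : 0 < L) {f : E → ℝ} {s : Set E} {fstar : ℝ}
    (hQG : ∀ z, f z - fstar ≤ L / 2 * Metric.infDist z s ^ 2) {z : E} (hz : z ∈ s)
    {x g v : ℕ → E} {α : ℕ → ℝ}
    (hv0 : v 0 = 0)
    (hsub : ∀ k, ∀ y, f y ≥ f (x k) + ⟪g k, y - x k⟫)
    (horth : ∀ k, ⟪g k, v k⟫ = 0)
    (hvrec : ∀ k, v (k + 1) = v k + g k)
    (hx : ∀ k, 1 ≤ k →
      x k = (((k : ℝ) / ((k : ℝ) + 1)) • x (k - 1) + ((1 : ℝ) / ((k : ℝ) + 1)) • x 0)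
        + α k • v k) (m : ℕ) :
    2 * L * m * (f (x (m - 1)) - fstar) + ‖v m‖ ^ 2 ≤ 2 * L * ⟪v m, x 0 - z⟫ := by
  induction m with
  | zero => simp [hv0]
  | succ m ih =>
    set y := ((m : ℝ) / ((m : ℝ) + 1)) • x (m - 1) + ((1 : ℝ) / ((m : ℝ) + 1)) • x 0
    have hy : ((m : ℝ) + 1) • y = (m : ℝ) • x (m - 1) + x 0 := by
      have hm : (m : ℝ) + 1 ≠ 0 := by positivity
      simp only [y, smul_add, smul_smul, mul_div_cancel₀ _ hm, one_smul]
    have hxy : ⟪g m, x m - y⟫ = 0 := by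
      rcases Nat.eq_zero_or_pos m with rfl | hm
      · simp [y]
      · rw [hx m hm, add_sub_cancel_left, real_inner_smul_right, horth, mul_zero]
    have hstep := heavyBall_step hL hQG hz m.cast_nonneg (hsub m) hy hxy
    have hnorm : ‖v (m + 1)‖ ^ 2 = ‖v m‖ ^ 2 + ‖g m‖ ^ 2 := by
      rw [hvrec, norm_add_sq_real, real_inner_comm, horth]; ring
    rw [hnorm, hvrec, inner_add_left, Nat.add_sub_cancel]
    push_cast
    linarith

theorem heavy_ball_line_search_guarantee_general
    {E : Type*} [NormedAddCommGroup E] [InnerProductSpace ℝ E]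
    (L : ℝ) (hL : 0 < L) (f : E → ℝ)
    (Xstar : Set E) (hne : Xstar.Nonempty)
    (fstar : ℝ)
    (hQG : ∀ z, f z - fstar ≤ L / 2 * Metric.infDist z Xstar ^ 2)
    (x g v : ℕ → E) (α : ℕ → ℝ)
    (hv0 : v 0 = 0)
    (hsub : ∀ k, ∀ y, f y ≥ f (x k) + ⟪g k, y - x k⟫)
    (horth : ∀ k, ⟪g k, v k⟫ = 0)
    (hvrec : ∀ k, v (k + 1) = v k + g k)
    (hx : ∀ k, 1 ≤ k →
      x k = (((k : ℝ) / ((k : ℝ) + 1)) • x (k - 1) + ((1 : ℝ) / ((k : ℝ) + 1)) • x 0)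
        + α k • v k) :
    ∀ n : ℕ, f (x n) - fstar ≤ L / (2 * ((n : ℝ) + 1)) * Metric.infDist (x 0) Xstar ^ 2 := by
  intro n
  refine le_mul_infDist_sq (by positivity) hne fun z hz => ?_
  have hpot := heavyBall_potential hL hQG hz hv0 hsub horth hvrec hx (n + 1)
  have hcs := two_mul_inner_sub_norm_sq_le hL.le (v (n + 1)) (x 0 - z)
  rw [Nat.add_sub_cancel, Nat.cast_succ] at hpot
  rw [dist_eq_norm, div_mul_eq_mul_div, le_div_iff₀ (by positivity)]
  nlinarith

theorem heavy_ball_line_search_guarantee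
    {E : Type*} [NormedAddCommGroup E] [InnerProductSpace ℝ E] [FiniteDimensional ℝ E]
    (L : ℝ) (hL : 0 < L) (f : E → ℝ) (hconv : ConvexOn ℝ Set.univ f)
    (Xstar : Set E) (hXstar : Xstar = {z | ∀ y, f z ≤ f y}) (hne : Xstar.Nonempty)
    (fstar : ℝ) (hfstar : ∀ z ∈ Xstar, f z = fstar)
    (hQG : ∀ z, f z - fstar ≤ L / 2 * Metric.infDist z Xstar ^ 2)
    (x g v : ℕ → E) (α : ℕ → ℝ)
    (hv0 : v 0 = 0)
    (hsub : ∀ k, ∀ y, f y ≥ f (x k) + ⟪g k, y - x k⟫)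
    (horth : ∀ k, ⟪g k, v k⟫ = 0)
    (hvrec : ∀ k, v (k + 1) = v k + g k)
    (hx : ∀ k, 1 ≤ k →
      x k = (((k : ℝ) / ((k : ℝ) + 1)) • x (k - 1) + ((1 : ℝ) / ((k : ℝ) + 1)) • x 0)
        + α k • v k)
    (hls : ∀ k, 1 ≤ k → ∀ a : ℝ,
      f (x k) ≤ f ((((k : ℝ) / ((k : ℝ) + 1)) • x (k - 1) + ((1 : ℝ) / ((k : ℝ) + 1)) • x 0)
        + a • v k)) :
    ∀ n : ℕ, f (x n) - fstar ≤ L / (2 * ((n : ℝ) + 1)) * Metric.infDist (x 0) Xstar ^ 2 :=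
  heavy_ball_line_search_guarantee_general L hL f Xstar hne fstar hQG x g v α hv0 hsub horth hvrec
    hx
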